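/- Fix a circle length c > 0. The map ℓ ↦ C_{K_ℓ} is non-decreasing on the signpost graphs: for every 0 < ℓ₁ ≤ ℓ₂, one has C_{K_{ℓ₁}} ≤ C_{K_{ℓ₂}}. -/

import Mathlib

open MeasureTheory Real Set Filter

noncomputable section

/-- `f ∈ H¹(0,L)` with weak derivative `f'`. -/
def IsH1Interval (L : ℝ) (f f' : ℝ → ℝ) : Prop :=
  (∀ x ∈ Icc (0:ℝ) L, f x = f 0 + ∫ t in (0:ℝ)..x, f' t) ∧
  IntervalIntegrable f' volume 0 L ∧
  IntervalIntegrable (fun x => f' x ^ 2) volume 0 L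

/-- `h ∈ H¹(0,∞)` with weak derivative `h'`. -/
def IsH1Half (h h' : ℝ → ℝ) : Prop :=
  (∀ x : ℝ, 0 ≤ x → h x = h 0 + ∫ t in (0:ℝ)..x, h' t) ∧
  MemLp h 2 (volume.restrict (Ioi 0)) ∧ MemLp h' 2 (volume.restrict (Ioi 0))

/-- `u = (f,g,h₁,h₂) ∈ H¹(G_ℓ)` on the signpost graph `G_ℓ`: a circle `Γ` of
length `c`, a bridge `B_ℓ` of length `ℓ` joining `Γ` to a vertex `v`, and two
half-lines attached at `v`, with the continuity conditions
`f(0) = f(c) = g(0)` and `g(ℓ) = h₁(0) = h₂(0)`. -/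
def SignpostH1 (c ℓ : ℝ) (f f' g g' h₁ h₁' h₂ h₂' : ℝ → ℝ) : Prop :=
  IsH1Interval c f f' ∧ IsH1Interval ℓ g g' ∧
  IsH1Half h₁ h₁' ∧ IsH1Half h₂ h₂' ∧
  f 0 = f c ∧ f c = g 0 ∧ g ℓ = h₁ 0 ∧ h₁ 0 = h₂ 0

/-- `‖u‖₂²` on `G_ℓ`. -/
def signMass (c ℓ : ℝ) (f g h₁ h₂ : ℝ → ℝ) : ℝ :=
  (∫ x in (0:ℝ)..c, f x ^ 2) + (∫ x in (0:ℝ)..ℓ, g x ^ 2) +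
  (∫ x in Ioi (0:ℝ), h₁ x ^ 2) + ∫ x in Ioi (0:ℝ), h₂ x ^ 2

/-- `‖u'‖₂²` on `G_ℓ`. -/
def signKin (c ℓ : ℝ) (f' g' h₁' h₂' : ℝ → ℝ) : ℝ :=
  (∫ x in (0:ℝ)..c, f' x ^ 2) + (∫ x in (0:ℝ)..ℓ, g' x ^ 2) +
  (∫ x in Ioi (0:ℝ), h₁' x ^ 2) + ∫ x in Ioi (0:ℝ), h₂' x ^ 2

/-- `‖u‖_{6,K_ℓ}⁶` on the compact core `K_ℓ = Γ ∪ B_ℓ`. -/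
def signSix (c ℓ : ℝ) (f g : ℝ → ℝ) : ℝ :=
  (∫ x in (0:ℝ)..c, f x ^ 6) + ∫ x in (0:ℝ)..ℓ, g x ^ 6

/-- The reduced Gagliardo–Nirenberg quotient on `G_ℓ`. -/
def signQ (c ℓ : ℝ) (f f' g g' h₁ h₁' h₂ h₂' : ℝ → ℝ) : ℝ :=
  signSix c ℓ f g / (signMass c ℓ f g h₁ h₂ ^ 2 * signKin c ℓ f' g' h₁' h₂')

/-- `u ≢ 0` on `G_ℓ`. -/
def signNonzero (c ℓ : ℝ) (f g h₁ h₂ : ℝ → ℝ) : Prop :=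
  (∃ x ∈ Icc (0:ℝ) c, f x ≠ 0) ∨ (∃ x ∈ Icc (0:ℝ) ℓ, g x ≠ 0) ∨
  (∃ x : ℝ, 0 ≤ x ∧ h₁ x ≠ 0) ∨ (∃ x : ℝ, 0 ≤ x ∧ h₂ x ≠ 0)

/-- The sharp reduced Gagliardo–Nirenberg constant `C_{K_ℓ}` on `G_ℓ`. -/
def signCK (c ℓ : ℝ) : ℝ :=
  sSup {q : ℝ | ∃ f f' g g' h₁ h₁' h₂ h₂' : ℝ → ℝ,
    SignpostH1 c ℓ f f' g g' h₁ h₁' h₂ h₂' ∧ signNonzero c ℓ f g h₁ h₂ ∧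
    q = signQ c ℓ f f' g g' h₁ h₁' h₂ h₂'}

/-!
A competitor on `G_ℓ` yields one on `G_{ℓ+δ}` with at least the same quotient: absorb the segment
`[0, δ]` of one half-line `hᵢ` into the bridge and replace both half-lines by copies of the
remaining tail of `hᵢ`. The sixth power on the core can only grow, and the new denominator
`‖u‖₂⁴ ‖u'‖₂²` is at most `(M + 2mᵢ)² (K + 2kᵢ)`, where `M, K` are the squared L² norms of `u, u'`
on the core and `mᵢ, kᵢ` those of `hᵢ, hᵢ'`. By AM–GM the product of these two bounds is at most
the square of the old denominator, so for one of the two half-lines the denominator does not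
increase. This proves the claim when `C_{K_{ℓ+δ}}` is a finite supremum. Otherwise, compressing
the bridge linearly by `a = ℓ₂ / ℓ₁` changes quotients by a factor at most `a²`, so the supremum
defining `C_{K_{ℓ₁}}` is unbounded too, and both sides are `0` by the convention for `sSup`.
-/

lemma div_le_div_of_eq_zero_imp {S₁ S₂ D₁ D₂ : ℝ} (hS : S₁ ≤ S₂) (hS₂ : 0 ≤ S₂) (hD₂ : 0 ≤ D₂)
    (hD : D₂ ≤ D₁) (hzero : D₂ = 0 → S₂ = 0) : S₁ / D₁ ≤ S₂ / D₂ := by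
  rcases hD₂.eq_or_lt with rfl | hD₂
  · rw [hzero rfl, div_zero]
    exact div_nonpos_of_nonpos_of_nonneg (hzero rfl ▸ hS) hD
  · exact div_le_div₀ hS₂ hS hD₂ hD

lemma le_or_le_of_mul_le_sq {x y z : ℝ} (hz : 0 ≤ z) (h : x * y ≤ z ^ 2) : x ≤ z ∨ y ≤ z := by
  by_contra! hlt
  nlinarith [mul_lt_mul'' hlt.1 hlt.2 hz hz]

lemma sq_mul_le_or_sq_mul_le {M K m₁ m₂ k₁ k₂ : ℝ} (hM : 0 ≤ M) (hK : 0 ≤ K)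
    (hm₁ : 0 ≤ m₁) (hm₂ : 0 ≤ m₂) (hk₁ : 0 ≤ k₁) (hk₂ : 0 ≤ k₂) :
    (M + 2 * m₁) ^ 2 * (K + 2 * k₁) ≤ (M + m₁ + m₂) ^ 2 * (K + k₁ + k₂) ∨
      (M + 2 * m₂) ^ 2 * (K + 2 * k₂) ≤ (M + m₁ + m₂) ^ 2 * (K + k₁ + k₂) := by
  apply le_or_le_of_mul_le_sq (by positivity)
  have hmass : (M + 2 * m₁) * (M + 2 * m₂) ≤ (M + m₁ + m₂) ^ 2 := by
    nlinarith [sq_nonneg (m₁ - m₂)]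
  have hkin : (K + 2 * k₁) * (K + 2 * k₂) ≤ (K + k₁ + k₂) ^ 2 := by
    nlinarith [sq_nonneg (k₁ - k₂)]
  calc _ = ((M + 2 * m₁) * (M + 2 * m₂)) ^ 2 * ((K + 2 * k₁) * (K + 2 * k₂)) := by ring
    _ ≤ ((M + m₁ + m₂) ^ 2) ^ 2 * (K + k₁ + k₂) ^ 2 := by gcongr
    _ = _ := by ring

lemma sSup_le_sSup_of_exists_le {A B : Set ℝ} {C : ℝ} (hC : 0 ≤ C) (hB : ∀ b ∈ B, 0 ≤ b)
    (hAB : ∀ a ∈ A, 0 < a → ∃ b ∈ B, a ≤ b) (hBA : ∀ b ∈ B, 0 < b → ∃ a ∈ A, b ≤ C * a) :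
    sSup A ≤ sSup B := by
  by_cases hbdd : BddAbove B
  · refine Real.sSup_le (fun a ha => ?_) (Real.sSup_nonneg hB)
    rcases le_or_gt a 0 with ha₀ | ha₀
    · exact ha₀.trans (Real.sSup_nonneg hB)
    · obtain ⟨b, hb, hab⟩ := hAB a ha ha₀
      exact hab.trans (le_csSup hbdd hb)
  · have hA : ¬ BddAbove A := by
      rintro ⟨M, hM⟩
      refine hbdd ⟨max (C * M) 0, fun b hb => ?_⟩
      rcases le_or_gt b 0 with hb₀ | hb₀
      · exact hb₀.trans (le_max_right _ _)
      · obtain ⟨a, ha, hba⟩ := hBA b hb hb₀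
        exact hba.trans ((mul_le_mul_of_nonneg_left (hM ha) hC).trans (le_max_left _ _))
    rw [Real.sSup_of_not_bddAbove hbdd, Real.sSup_of_not_bddAbove hA]

lemma intervalIntegral_pow_nonneg {L : ℝ} (hL : 0 ≤ L) (F : ℝ → ℝ) {n : ℕ} (hn : Even n) :
    0 ≤ ∫ x in (0:ℝ)..L, F x ^ n :=
  intervalIntegral.integral_nonneg hL fun _ _ => hn.pow_nonneg _

lemma integral_Ioi_sq_nonneg (F : ℝ → ℝ) : 0 ≤ ∫ x in Ioi 0, F x ^ 2 :=
  integral_nonneg fun x => sq_nonneg (F x)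

lemma ae_eq_zero_of_integral_sq_eq_zero {α : Type*} [MeasurableSpace α] {μ : Measure α}
    {F : α → ℝ} (hF : Integrable (fun x => F x ^ 2) μ) (h₀ : ∫ x, F x ^ 2 ∂μ = 0) :
    F =ᵐ[μ] 0 := by
  filter_upwards [(integral_eq_zero_iff_of_nonneg (fun x => sq_nonneg (F x)) hF).mp h₀] with x hx
  exact pow_eq_zero_iff two_ne_zero |>.mp hx

lemma setIntegral_eq_zero_of_setIntegral_sq_eq_zero {α : Type*} [MeasurableSpace α]
    {μ : Measure α} {s t : Set α} {F : α → ℝ} (hts : t ⊆ s)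
    (hF : IntegrableOn (fun x => F x ^ 2) s μ) (h₀ : ∫ x in s, F x ^ 2 ∂μ = 0) :
    ∫ x in t, F x ∂μ = 0 :=
  integral_eq_zero_of_ae
    (ae_restrict_of_ae_restrict_of_subset hts (ae_eq_zero_of_integral_sq_eq_zero hF h₀))

lemma intervalIntegral_eq_zero_of_forall_mem_Icc {L : ℝ} (hL : 0 ≤ L) {F : ℝ → ℝ}
    (hF : ∀ x ∈ Icc 0 L, F x = 0) : ∫ x in (0:ℝ)..L, F x = 0 := by
  rw [intervalIntegral.integral_congr (g := fun _ => (0:ℝ)) fun x hx => hF x (uIcc_of_le hL ▸ hx)]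
  simp

lemma measurePreserving_add_right_restrict_Ioi (δ : ℝ) :
    MeasurePreserving (· + δ) (volume.restrict (Ioi 0)) (volume.restrict (Ioi δ)) := by
  have h := (measurePreserving_add_right volume δ).restrict_preimage (s := Ioi δ) measurableSet_Ioi
  rwa [preimage_add_const_Ioi, sub_self] at h

lemma MeasureTheory.MemLp.comp_add_right_restrict_Ioi {p : ENNReal} {F : ℝ → ℝ} {δ : ℝ}
    (hF : MemLp F p (volume.restrict (Ioi 0))) (hδ : 0 ≤ δ) :
    MemLp (fun x => F (x + δ)) p (volume.restrict (Ioi 0)) :=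
  (hF.mono_measure (Measure.restrict_mono (Ioi_subset_Ioi hδ) le_rfl)).comp_measurePreserving
    (measurePreserving_add_right_restrict_Ioi δ)

lemma integral_Ioi_eq_intervalIntegral_add_integral_comp_add_right {F : ℝ → ℝ} {δ : ℝ}
    (hF : IntegrableOn F (Ioi 0)) (hδ : 0 ≤ δ) :
    ∫ x in Ioi 0, F x = (∫ x in (0:ℝ)..δ, F x) + ∫ x in Ioi 0, F (x + δ) := by
  rw [(measurePreserving_add_right_restrict_Ioi δ).integral_comp (measurableEmbedding_addRight δ),
    intervalIntegral.integral_interval_add_Ioi hF (hF.mono_set (Ioi_subset_Ioi hδ))]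

namespace IsH1Interval

variable {L : ℝ} {f f' : ℝ → ℝ}

lemma continuousOn (hL : 0 ≤ L) (H : IsH1Interval L f f') : ContinuousOn f (Icc 0 L) := by
  have hprim := intervalIntegral.continuousOn_primitive_interval' H.2.1 left_mem_uIcc
  rw [uIcc_of_le hL] at hprim
  exact (continuousOn_const.add hprim).congr fun x hx => H.1 x hx

lemma intervalIntegrable_pow (hL : 0 ≤ L) (H : IsH1Interval L f f') (n : ℕ) :
    IntervalIntegrable (fun x => f x ^ n) volume 0 L :=
  ContinuousOn.intervalIntegrable (uIcc_of_le hL ▸ (H.continuousOn hL).pow n)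

lemma integral_pow_six_eq_zero_of_integral_sq_eq_zero (hL : 0 ≤ L) (H : IsH1Interval L f f')
    (h₀ : ∫ x in (0:ℝ)..L, f x ^ 2 = 0) : ∫ x in (0:ℝ)..L, f x ^ 6 = 0 := by
  rw [intervalIntegral.integral_of_le hL] at h₀ ⊢
  refine integral_eq_zero_of_ae ?_
  filter_upwards [ae_eq_zero_of_integral_sq_eq_zero (H.intervalIntegrable_pow hL 2).1 h₀]
    with x hx
  simp [hx]

lemma eq_of_integral_deriv_sq_eq_zero (hL : 0 ≤ L) (H : IsH1Interval L f f')
    (h₀ : ∫ x in (0:ℝ)..L, f' x ^ 2 = 0) : ∀ x ∈ Icc 0 L, f x = f 0 := by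
  intro x hx
  rw [intervalIntegral.integral_of_le hL] at h₀
  rw [H.1 x hx, intervalIntegral.integral_of_le hx.1,
    setIntegral_eq_zero_of_setIntegral_sq_eq_zero (Ioc_subset_Ioc_right hx.2) H.2.2.1 h₀, add_zero]

lemma comp_mul_left {a : ℝ} (ha : 0 < a) {g g' : ℝ → ℝ} (H : IsH1Interval (a * L) g g') :
    IsH1Interval L (fun x => g (a * x)) (fun x => a * g' (a * x)) := by
  have hcomp : ∀ {F : ℝ → ℝ}, IntervalIntegrable F volume 0 (a * L) →
      IntervalIntegrable (fun x => F (a * x)) volume 0 L := fun hF => by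
    simpa [ha.ne'] using hF.comp_mul_left (c := a)
  refine ⟨fun x hx => ?_, (hcomp H.2.1).const_mul a, ?_⟩
  · have hax : a * x ∈ Icc 0 (a * L) :=
      ⟨mul_nonneg ha.le hx.1, mul_le_mul_of_nonneg_left hx.2 ha.le⟩
    rw [intervalIntegral.integral_const_mul, intervalIntegral.integral_comp_mul_left _ ha.ne',
      smul_eq_mul, mul_zero, ← mul_assoc, mul_inv_cancel₀ ha.ne', one_mul]
    simpa using H.1 _ hax
  · simp_rw [mul_pow]
    exact (hcomp (F := fun y => g' y ^ 2) H.2.2).const_mul _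

end IsH1Interval

namespace IsH1Half

variable {h h' : ℝ → ℝ}

lemma isH1Interval (H : IsH1Half h h') {T : ℝ} (hT : 0 ≤ T) : IsH1Interval T h h' := by
  have hrestrict : MemLp h' 2 (volume.restrict (Ioc 0 T)) :=
    H.2.2.mono_measure (Measure.restrict_mono Ioc_subset_Ioi_self le_rfl)
  refine ⟨fun x hx => H.1 x hx.1, ?_, ?_⟩
  · exact (intervalIntegrable_iff_integrableOn_Ioc_of_le hT).2 (hrestrict.integrable one_le_two)
  · exact (intervalIntegrable_iff_integrableOn_Ioc_of_le hT).2 hrestrict.integrable_sq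

lemma apply_zero_eq_zero_of_integral_deriv_sq_eq_zero (H : IsH1Half h h')
    (h₀ : ∫ x in Ioi 0, h' x ^ 2 = 0) : h 0 = 0 := by
  have hconst : h =ᵐ[volume.restrict (Ioi 0)] fun _ => h 0 := by
    filter_upwards [ae_restrict_mem measurableSet_Ioi] with x hx
    rw [H.1 x (le_of_lt hx), intervalIntegral.integral_of_le (le_of_lt hx),
      setIntegral_eq_zero_of_setIntegral_sq_eq_zero Ioc_subset_Ioi_self H.2.2.integrable_sq h₀,
      add_zero]
  have hmem := (memLp_const_iff two_ne_zero ENNReal.ofNat_ne_top).1 (H.2.1.ae_eq hconst)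
  simpa using hmem

lemma comp_add_right (H : IsH1Half h h') {δ : ℝ} (hδ : 0 ≤ δ) :
    IsH1Half (fun x => h (x + δ)) (fun x => h' (x + δ)) := by
  refine ⟨fun x hx => ?_, H.2.1.comp_add_right_restrict_Ioi hδ,
    H.2.2.comp_add_right_restrict_Ioi hδ⟩
  have hint := (H.isH1Interval (T := x + δ) (by linarith)).2.1
  have hδx : δ ∈ uIcc 0 (x + δ) := mem_uIcc_of_le hδ (by linarith)
  dsimp only
  rw [zero_add, H.1 _ (by linarith), H.1 _ hδ, intervalIntegral.integral_comp_add_right, zero_add,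
    add_assoc, intervalIntegral.integral_add_adjacent_intervals]
  · exact hint.mono_set (uIcc_subset_uIcc left_mem_uIcc hδx)
  · exact hint.mono_set (uIcc_subset_uIcc hδx right_mem_uIcc)

end IsH1Half

def concatAt (ℓ : ℝ) (u v : ℝ → ℝ) (x : ℝ) : ℝ :=
  if x ≤ ℓ then u x else v (x - ℓ)

section concatAt

variable {ℓ δ : ℝ} {u v : ℝ → ℝ}

lemma concatAt_of_le {x : ℝ} (hx : x ≤ ℓ) : concatAt ℓ u v x = u x := if_pos hx

lemma concatAt_of_lt {x : ℝ} (hx : ℓ < x) : concatAt ℓ u v x = v (x - ℓ) := if_neg hx.not_ge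

lemma concatAt_add (huv : u ℓ = v 0) (hδ : 0 ≤ δ) : concatAt ℓ u v (ℓ + δ) = v δ := by
  rcases hδ.eq_or_lt with rfl | hδ
  · rw [add_zero, concatAt_of_le le_rfl, huv]
  · rw [concatAt_of_lt (by linarith), add_sub_cancel_left]

lemma concatAt_pow (n : ℕ) :
    (fun x => concatAt ℓ u v x ^ n) = concatAt ℓ (fun x => u x ^ n) (fun x => v x ^ n) := by
  ext x
  unfold concatAt
  split_ifs <;> rfl

lemma intervalIntegrable_concatAt_left (hℓ : 0 ≤ ℓ) (hu : IntervalIntegrable u volume 0 ℓ) :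
    IntervalIntegrable (concatAt ℓ u v) volume 0 ℓ :=
  hu.congr fun x hx => (concatAt_of_le (by simpa [hℓ] using hx.2)).symm

lemma intervalIntegrable_concatAt_right (hδ : 0 ≤ δ) (hv : IntervalIntegrable v volume 0 δ) :
    IntervalIntegrable (concatAt ℓ u v) volume ℓ (ℓ + δ) := by
  have hshift : IntervalIntegrable (fun x => v (x - ℓ)) volume ℓ (ℓ + δ) := by
    simpa [add_comm] using hv.comp_sub_right ℓ
  refine hshift.congr fun x hx => (concatAt_of_lt ?_).symm
  rw [uIoc_of_le (by linarith)] at hx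
  exact hx.1

lemma intervalIntegrable_concatAt (hℓ : 0 ≤ ℓ) (hδ : 0 ≤ δ)
    (hu : IntervalIntegrable u volume 0 ℓ) (hv : IntervalIntegrable v volume 0 δ) :
    IntervalIntegrable (concatAt ℓ u v) volume 0 (ℓ + δ) :=
  (intervalIntegrable_concatAt_left hℓ hu).trans (intervalIntegrable_concatAt_right hδ hv)

lemma integral_concatAt (hℓ : 0 ≤ ℓ) (hδ : 0 ≤ δ)
    (hu : IntervalIntegrable u volume 0 ℓ) (hv : IntervalIntegrable v volume 0 δ) :
    ∫ x in (0:ℝ)..ℓ + δ, concatAt ℓ u v x = (∫ x in (0:ℝ)..ℓ, u x) + ∫ x in (0:ℝ)..δ, v x := by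
  rw [← intervalIntegral.integral_add_adjacent_intervals (intervalIntegrable_concatAt_left hℓ hu)
    (intervalIntegrable_concatAt_right hδ hv)]
  congr 1
  · refine intervalIntegral.integral_congr fun x hx => concatAt_of_le ?_
    exact (uIcc_of_le hℓ ▸ hx).2
  · rw [intervalIntegral.integral_congr_ae (g := fun x => v (x - ℓ)) (ae_of_all _ fun x hx =>
      concatAt_of_lt (uIoc_of_le (by linarith : ℓ ≤ ℓ + δ) ▸ hx).1),
      intervalIntegral.integral_comp_sub_right, sub_self, add_sub_cancel_left]

end concatAt

lemma IsH1Interval.concatAt {ℓ δ : ℝ} (hℓ : 0 ≤ ℓ) (hδ : 0 ≤ δ) {g g' h h' : ℝ → ℝ}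
    (Hg : IsH1Interval ℓ g g') (Hh : IsH1Interval δ h h') (hgh : g ℓ = h 0) :
    IsH1Interval (ℓ + δ) (concatAt ℓ g h) (concatAt ℓ g' h') := by
  refine ⟨fun x hx => ?_, intervalIntegrable_concatAt hℓ hδ Hg.2.1 Hh.2.1, ?_⟩
  · rw [concatAt_of_le hℓ]
    rcases le_or_gt x ℓ with hxℓ | hxℓ
    · rw [concatAt_of_le hxℓ, intervalIntegral.integral_congr fun t ht => concatAt_of_le
        ((uIcc_of_le hx.1 ▸ ht).2.trans hxℓ)]
      exact Hg.1 x ⟨hx.1, hxℓ⟩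
    · obtain ⟨y, hy, rfl⟩ : ∃ y, 0 ≤ y ∧ x = ℓ + y := ⟨x - ℓ, by linarith, by ring⟩
      have hyδ : y ≤ δ := by linarith [hx.2]
      have hh'y : IntervalIntegrable h' volume 0 y :=
        Hh.2.1.mono_set (uIcc_subset_uIcc left_mem_uIcc (mem_uIcc_of_le hy hyδ))
      rw [concatAt_add hgh hy, integral_concatAt hℓ hy Hg.2.1 hh'y, Hh.1 y ⟨hy, hyδ⟩, ← hgh,
        Hg.1 ℓ ⟨hℓ, le_rfl⟩, add_assoc]
  · rw [concatAt_pow]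
    exact intervalIntegrable_concatAt hℓ hδ Hg.2.2 Hh.2.2

def signDen (c ℓ : ℝ) (f f' g g' h₁ h₁' h₂ h₂' : ℝ → ℝ) : ℝ :=
  signMass c ℓ f g h₁ h₂ ^ 2 * signKin c ℓ f' g' h₁' h₂'

def signQSet (c ℓ : ℝ) : Set ℝ :=
  {q : ℝ | ∃ f f' g g' h₁ h₁' h₂ h₂' : ℝ → ℝ,
    SignpostH1 c ℓ f f' g g' h₁ h₁' h₂ h₂' ∧ signNonzero c ℓ f g h₁ h₂ ∧
    q = signQ c ℓ f f' g g' h₁ h₁' h₂ h₂'}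

section signpost

variable {c ℓ : ℝ} {f f' g g' h₁ h₁' h₂ h₂' : ℝ → ℝ}

lemma signCK_eq_sSup_signQSet : signCK c ℓ = sSup (signQSet c ℓ) := rfl

lemma signQ_eq_signSix_div_signDen :
    signQ c ℓ f f' g g' h₁ h₁' h₂ h₂' =
      signSix c ℓ f g / signDen c ℓ f f' g g' h₁ h₁' h₂ h₂' := rfl

lemma signKin_eq_signMass : signKin = signMass := rfl

lemma signSix_nonneg (hc : 0 ≤ c) (hℓ : 0 ≤ ℓ) : 0 ≤ signSix c ℓ f g :=
  add_nonneg (intervalIntegral_pow_nonneg hc f (by decide))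
    (intervalIntegral_pow_nonneg hℓ g (by decide))

lemma signMass_nonneg (hc : 0 ≤ c) (hℓ : 0 ≤ ℓ) : 0 ≤ signMass c ℓ f g h₁ h₂ := by
  have := intervalIntegral_pow_nonneg hc f even_two
  have := intervalIntegral_pow_nonneg hℓ g even_two
  unfold signMass
  positivity

lemma integral_sq_eq_zero_of_signMass_eq_zero (hc : 0 ≤ c) (hℓ : 0 ≤ ℓ)
    (h₀ : signMass c ℓ f g h₁ h₂ = 0) :
    (∫ x in (0:ℝ)..c, f x ^ 2) = 0 ∧ (∫ x in (0:ℝ)..ℓ, g x ^ 2) = 0 ∧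
      (∫ x in Ioi 0, h₁ x ^ 2) = 0 ∧ (∫ x in Ioi 0, h₂ x ^ 2) = 0 := by
  have := intervalIntegral_pow_nonneg hc f even_two
  have := intervalIntegral_pow_nonneg hℓ g even_two
  have := integral_Ioi_sq_nonneg h₁
  have := integral_Ioi_sq_nonneg h₂
  unfold signMass at h₀
  refine ⟨?_, ?_, ?_, ?_⟩ <;> linarith

lemma signDen_nonneg (hc : 0 ≤ c) (hℓ : 0 ≤ ℓ) : 0 ≤ signDen c ℓ f f' g g' h₁ h₁' h₂ h₂' :=
  mul_nonneg (sq_nonneg _) (signKin_eq_signMass ▸ signMass_nonneg hc hℓ)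

lemma signDen_le_signDen {ℓ' : ℝ} {u u' v v' w₁ w₁' w₂ w₂' : ℝ → ℝ} (hc : 0 ≤ c) (hℓ : 0 ≤ ℓ)
    (hM : signMass c ℓ f g h₁ h₂ ≤ signMass c ℓ' u v w₁ w₂)
    (hK : signKin c ℓ f' g' h₁' h₂' ≤ signKin c ℓ' u' v' w₁' w₂') :
    signDen c ℓ f f' g g' h₁ h₁' h₂ h₂' ≤ signDen c ℓ' u u' v v' w₁ w₁' w₂ w₂' :=
  mul_le_mul (pow_le_pow_left₀ (signMass_nonneg hc hℓ) hM 2) hK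
    (signKin_eq_signMass ▸ signMass_nonneg hc hℓ) (sq_nonneg _)

lemma signDen_le_or_signDen_le (hc : 0 ≤ c) (hℓ : 0 ≤ ℓ) :
    signDen c ℓ f f' g g' h₁ h₁' h₁ h₁' ≤ signDen c ℓ f f' g g' h₁ h₁' h₂ h₂' ∨
      signDen c ℓ f f' g g' h₂ h₂' h₂ h₂' ≤ signDen c ℓ f f' g g' h₁ h₁' h₂ h₂' := by
  have hM := add_nonneg (intervalIntegral_pow_nonneg hc f even_two)
    (intervalIntegral_pow_nonneg hℓ g even_two)
  have hK := add_nonneg (intervalIntegral_pow_nonneg hc f' even_two)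
    (intervalIntegral_pow_nonneg hℓ g' even_two)
  have key := sq_mul_le_or_sq_mul_le hM hK (integral_Ioi_sq_nonneg h₁)
    (integral_Ioi_sq_nonneg h₂) (integral_Ioi_sq_nonneg h₁') (integral_Ioi_sq_nonneg h₂')
  unfold signDen signMass signKin
  rcases key with key | key
  · left; convert key using 2 <;> ring
  · right; convert key using 2 <;> ring

lemma signSix_pos_of_signQ_pos (hc : 0 ≤ c) (hℓ : 0 ≤ ℓ)
    (hQ : 0 < signQ c ℓ f f' g g' h₁ h₁' h₂ h₂') : 0 < signSix c ℓ f g := by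
  by_contra! hS
  exact hQ.not_ge (div_nonpos_of_nonpos_of_nonneg hS (signDen_nonneg hc hℓ))

lemma nonneg_of_mem_signQSet (hc : 0 ≤ c) (hℓ : 0 ≤ ℓ) : ∀ q ∈ signQSet c ℓ, 0 ≤ q := by
  rintro q ⟨f, f', g, g', h₁, h₁', h₂, h₂', -, -, rfl⟩
  exact div_nonneg (signSix_nonneg hc hℓ) (signDen_nonneg hc hℓ)

lemma signNonzero_of_signSix_pos (hc : 0 ≤ c) (hℓ : 0 ≤ ℓ) (hS : 0 < signSix c ℓ f g) :
    signNonzero c ℓ f g h₁ h₂ := by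
  by_contra hzero
  simp only [signNonzero, not_or, not_exists, not_and, not_not] at hzero
  refine hS.ne' ?_
  unfold signSix
  rw [intervalIntegral_eq_zero_of_forall_mem_Icc hc fun x hx => by simp [hzero.1 x hx],
    intervalIntegral_eq_zero_of_forall_mem_Icc hℓ fun x hx => by simp [hzero.2.1 x hx], add_zero]

namespace SignpostH1

lemma signSix_eq_zero_of_signMass_eq_zero (hc : 0 ≤ c) (hℓ : 0 ≤ ℓ)
    (hu : SignpostH1 c ℓ f f' g g' h₁ h₁' h₂ h₂') (h₀ : signMass c ℓ f g h₁ h₂ = 0) :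
    signSix c ℓ f g = 0 := by
  obtain ⟨hf, hg, -⟩ := integral_sq_eq_zero_of_signMass_eq_zero hc hℓ h₀
  unfold signSix
  rw [hu.1.integral_pow_six_eq_zero_of_integral_sq_eq_zero hc hf,
    hu.2.1.integral_pow_six_eq_zero_of_integral_sq_eq_zero hℓ hg, add_zero]

lemma signSix_eq_zero_of_signKin_eq_zero (hc : 0 ≤ c) (hℓ : 0 ≤ ℓ)
    (hu : SignpostH1 c ℓ f f' g g' h₁ h₁' h₂ h₂') (h₀ : signKin c ℓ f' g' h₁' h₂' = 0) :
    signSix c ℓ f g = 0 := by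
  obtain ⟨Hf, Hg, Hh₁, -, e₁, e₂, e₃, -⟩ := hu
  obtain ⟨hf', hg', hh₁', -⟩ :=
    integral_sq_eq_zero_of_signMass_eq_zero hc hℓ (signKin_eq_signMass ▸ h₀)
  have hg := Hg.eq_of_integral_deriv_sq_eq_zero hℓ hg'
  have hf := Hf.eq_of_integral_deriv_sq_eq_zero hc hf'
  have hg₀ : g 0 = 0 := by
    rw [← hg ℓ ⟨hℓ, le_rfl⟩, e₃, Hh₁.apply_zero_eq_zero_of_integral_deriv_sq_eq_zero hh₁']
  unfold signSix
  rw [intervalIntegral_eq_zero_of_forall_mem_Icc hc fun x hx => by simp [hf x hx, e₁, e₂, hg₀],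
    intervalIntegral_eq_zero_of_forall_mem_Icc hℓ fun x hx => by simp [hg x hx, hg₀], add_zero]

lemma signSix_eq_zero_of_signDen_eq_zero (hc : 0 ≤ c) (hℓ : 0 ≤ ℓ)
    (hu : SignpostH1 c ℓ f f' g g' h₁ h₁' h₂ h₂') (h₀ : signDen c ℓ f f' g g' h₁ h₁' h₂ h₂' = 0) :
    signSix c ℓ f g = 0 := by
  rcases mul_eq_zero.1 h₀ with hM | hK
  · exact hu.signSix_eq_zero_of_signMass_eq_zero hc hℓ (pow_eq_zero_iff two_ne_zero |>.1 hM)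
  · exact hu.signSix_eq_zero_of_signKin_eq_zero hc hℓ hK

end SignpostH1

end signpost

section extension

variable {c ℓ δ : ℝ} {f f' g g' h h' : ℝ → ℝ}

lemma signSix_le_signSix_concatAt (hℓ : 0 ≤ ℓ) (hδ : 0 ≤ δ)
    (hg : IntervalIntegrable (fun x => g x ^ 6) volume 0 ℓ)
    (hh : IntervalIntegrable (fun x => h x ^ 6) volume 0 δ) :
    signSix c ℓ f g ≤ signSix c (ℓ + δ) f (concatAt ℓ g h) := by
  have := intervalIntegral_pow_nonneg hδ h (n := 6) (by decide)
  unfold signSix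
  rw [concatAt_pow, integral_concatAt hℓ hδ hg hh]
  linarith

lemma signMass_concatAt_le (hℓ : 0 ≤ ℓ) (hδ : 0 ≤ δ)
    (hg : IntervalIntegrable (fun x => g x ^ 2) volume 0 ℓ)
    (hh : IntegrableOn (fun x => h x ^ 2) (Ioi 0)) :
    signMass c (ℓ + δ) f (concatAt ℓ g h) (fun x => h (x + δ)) (fun x => h (x + δ)) ≤
      signMass c ℓ f g h h := by
  have hhδ : IntervalIntegrable (fun x => h x ^ 2) volume 0 δ :=
    (intervalIntegrable_iff_integrableOn_Ioc_of_le hδ).2 (hh.mono_set Ioc_subset_Ioi_self)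
  have hsplit : ∫ x in Ioi 0, h x ^ 2 =
      (∫ x in (0:ℝ)..δ, h x ^ 2) + ∫ x in Ioi 0, h (x + δ) ^ 2 :=
    integral_Ioi_eq_intervalIntegral_add_integral_comp_add_right hh hδ
  have := intervalIntegral_pow_nonneg hδ h even_two
  unfold signMass
  rw [concatAt_pow, integral_concatAt hℓ hδ hg hhδ]
  linarith

lemma exists_extension (hc : 0 ≤ c) (hℓ : 0 ≤ ℓ) (hδ : 0 ≤ δ)
    (Hf : IsH1Interval c f f') (Hg : IsH1Interval ℓ g g') (Hh : IsH1Half h h')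
    (e₁ : f 0 = f c) (e₂ : f c = g 0) (e₃ : g ℓ = h 0) :
    ∃ G G' H H' : ℝ → ℝ, SignpostH1 c (ℓ + δ) f f' G G' H H' H H' ∧
      signSix c ℓ f g ≤ signSix c (ℓ + δ) f G ∧
      signDen c (ℓ + δ) f f' G G' H H' H H' ≤ signDen c ℓ f f' g g' h h' h h' := by
  have HhI := Hh.isH1Interval hδ
  have HH := Hh.comp_add_right hδ
  refine ⟨concatAt ℓ g h, concatAt ℓ g' h', fun x => h (x + δ), fun x => h' (x + δ),
    ⟨Hf, Hg.concatAt hℓ hδ HhI e₃, HH, HH, e₁, by rwa [concatAt_of_le hℓ], ?_, rfl⟩,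
    signSix_le_signSix_concatAt hℓ hδ (Hg.intervalIntegrable_pow hℓ 6)
      (HhI.intervalIntegrable_pow hδ 6),
    signDen_le_signDen hc (by linarith)
      (signMass_concatAt_le hℓ hδ (Hg.intervalIntegrable_pow hℓ 2) Hh.2.1.integrable_sq)
      (signKin_eq_signMass ▸ signMass_concatAt_le hℓ hδ Hg.2.2 Hh.2.2.integrable_sq)⟩
  simp only [concatAt_add e₃ hδ, zero_add]

lemma exists_mem_signQSet_add_ge (hc : 0 ≤ c) (hℓ : 0 ≤ ℓ) (hδ : 0 ≤ δ) {q : ℝ}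
    (hq : q ∈ signQSet c ℓ) (hq₀ : 0 < q) : ∃ q' ∈ signQSet c (ℓ + δ), q ≤ q' := by
  obtain ⟨f, f', g, g', h₁, h₁', h₂, h₂', ⟨Hf, Hg, Hh₁, Hh₂, e₁, e₂, e₃, e₄⟩, -, rfl⟩ := hq
  have hS := signSix_pos_of_signQ_pos hc hℓ hq₀
  have extend : ∀ {h h' : ℝ → ℝ}, IsH1Half h h' → g ℓ = h 0 →
      signDen c ℓ f f' g g' h h' h h' ≤ signDen c ℓ f f' g g' h₁ h₁' h₂ h₂' →
      ∃ q' ∈ signQSet c (ℓ + δ), signQ c ℓ f f' g g' h₁ h₁' h₂ h₂' ≤ q' := by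
    intro h h' Hh e hD
    obtain ⟨G, G', H, H', hv, hSv, hDv⟩ := exists_extension hc hℓ hδ Hf Hg Hh e₁ e₂ e
    have hℓδ : 0 ≤ ℓ + δ := by linarith
    refine ⟨_, ⟨f, f', G, G', H, H', H, H', hv,
      signNonzero_of_signSix_pos hc hℓδ (hS.trans_le hSv), rfl⟩, ?_⟩
    exact div_le_div_of_eq_zero_imp hSv (signSix_nonneg hc hℓδ) (signDen_nonneg hc hℓδ)
      (hDv.trans hD) (hv.signSix_eq_zero_of_signDen_eq_zero hc hℓδ)
  rcases signDen_le_or_signDen_le hc hℓ with hD | hD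
  · exact extend Hh₁ e₃ hD
  · exact extend Hh₂ (e₃.trans e₄) hD

end extension

section compression

variable {c ℓ a : ℝ} {f f' g g' h₁ h₁' h₂ h₂' : ℝ → ℝ}

lemma SignpostH1.comp_mul_left (ha : 0 < a) (hu : SignpostH1 c (a * ℓ) f f' g g' h₁ h₁' h₂ h₂') :
    SignpostH1 c ℓ f f' (fun x => g (a * x)) (fun x => a * g' (a * x)) h₁ h₁' h₂ h₂' := by
  obtain ⟨Hf, Hg, Hh₁, Hh₂, e₁, e₂, e₃, e₄⟩ := hu
  exact ⟨Hf, Hg.comp_mul_left ha, Hh₁, Hh₂, e₁, by simpa using e₂, e₃, e₄⟩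

lemma intervalIntegral_comp_mul_left_zero (ha : a ≠ 0) (F : ℝ → ℝ) :
    ∫ x in (0:ℝ)..ℓ, F (a * x) = a⁻¹ * ∫ x in (0:ℝ)..a * ℓ, F x := by
  rw [intervalIntegral.integral_comp_mul_left F ha, mul_zero, smul_eq_mul]

lemma signSix_le_mul_signSix_comp_mul_left (hc : 0 ≤ c) (ha : 1 ≤ a) :
    signSix c (a * ℓ) f g ≤ a * signSix c ℓ f (fun x => g (a * x)) := by
  have hf := intervalIntegral_pow_nonneg hc f (n := 6) (by decide)
  have hg : ∫ x in (0:ℝ)..ℓ, g (a * x) ^ 6 = a⁻¹ * ∫ x in (0:ℝ)..a * ℓ, g x ^ 6 :=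
    intervalIntegral_comp_mul_left_zero (by positivity) fun y => g y ^ 6
  unfold signSix
  rw [hg, mul_add, ← mul_assoc, mul_inv_cancel₀ (by positivity), one_mul]
  nlinarith

lemma signMass_comp_mul_left_le (hℓ : 0 ≤ ℓ) (ha : 1 ≤ a) :
    signMass c ℓ f (fun x => g (a * x)) h₁ h₂ ≤ signMass c (a * ℓ) f g h₁ h₂ := by
  have hg : ∫ x in (0:ℝ)..ℓ, g (a * x) ^ 2 = a⁻¹ * ∫ x in (0:ℝ)..a * ℓ, g x ^ 2 :=
    intervalIntegral_comp_mul_left_zero (by positivity) fun y => g y ^ 2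
  have := mul_le_of_le_one_left
    (intervalIntegral_pow_nonneg (mul_nonneg (by linarith) hℓ : 0 ≤ a * ℓ) g even_two)
    (inv_le_one_of_one_le₀ ha)
  unfold signMass
  rw [hg]
  linarith

lemma signKin_comp_mul_left_le (hc : 0 ≤ c) (ha : 1 ≤ a) :
    signKin c ℓ f' (fun x => a * g' (a * x)) h₁' h₂' ≤ a * signKin c (a * ℓ) f' g' h₁' h₂' := by
  have hg : ∫ x in (0:ℝ)..ℓ, (a * g' (a * x)) ^ 2 = a * ∫ x in (0:ℝ)..a * ℓ, g' x ^ 2 := by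
    simp_rw [mul_pow]
    rw [intervalIntegral.integral_const_mul,
      intervalIntegral_comp_mul_left_zero (by positivity) fun y => g' y ^ 2]
    field_simp
  have := intervalIntegral_pow_nonneg hc f' even_two
  have := integral_Ioi_sq_nonneg h₁'
  have := integral_Ioi_sq_nonneg h₂'
  unfold signKin
  rw [hg]
  nlinarith

lemma signDen_comp_mul_left_le (hc : 0 ≤ c) (hℓ : 0 ≤ ℓ) (ha : 1 ≤ a) :
    signDen c ℓ f f' (fun x => g (a * x)) (fun x => a * g' (a * x)) h₁ h₁' h₂ h₂' ≤
      a * signDen c (a * ℓ) f f' g g' h₁ h₁' h₂ h₂' :=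
  calc _ ≤ signMass c (a * ℓ) f g h₁ h₂ ^ 2 * (a * signKin c (a * ℓ) f' g' h₁' h₂') :=
        mul_le_mul (pow_le_pow_left₀ (signMass_nonneg hc hℓ) (signMass_comp_mul_left_le hℓ ha) 2)
          (signKin_comp_mul_left_le hc ha) (signKin_eq_signMass ▸ signMass_nonneg hc hℓ)
          (sq_nonneg _)
    _ = a * signDen c (a * ℓ) f f' g g' h₁ h₁' h₂ h₂' := by unfold signDen; ring

lemma exists_mem_signQSet_mul_ge (hc : 0 ≤ c) (hℓ : 0 ≤ ℓ) (ha : 1 ≤ a) {q : ℝ}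
    (hq : q ∈ signQSet c (a * ℓ)) (hq₀ : 0 < q) : ∃ q' ∈ signQSet c ℓ, q ≤ a ^ 2 * q' := by
  obtain ⟨f, f', g, g', h₁, h₁', h₂, h₂', hu, -, rfl⟩ := hq
  have ha₀ : 0 < a := by linarith
  have hv := hu.comp_mul_left ha₀
  have hS : signSix c (a * ℓ) f g ≤ a * signSix c ℓ f fun x => g (a * x) :=
    signSix_le_mul_signSix_comp_mul_left hc ha
  have hSv : 0 < signSix c ℓ f fun x => g (a * x) :=
    pos_of_mul_pos_right ((signSix_pos_of_signQ_pos hc (by positivity) hq₀).trans_le hS) ha₀.le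
  refine ⟨_, ⟨_, _, _, _, _, _, _, _, hv, signNonzero_of_signSix_pos hc hℓ hSv, rfl⟩, ?_⟩
  calc _ ≤ a * signSix c ℓ f (fun x => g (a * x)) /
        (signDen c ℓ f f' (fun x => g (a * x)) (fun x => a * g' (a * x)) h₁ h₁' h₂ h₂' / a) :=
        div_le_div_of_eq_zero_imp hS (by positivity) (div_nonneg (signDen_nonneg hc hℓ) ha₀.le)
          ((div_le_iff₀' ha₀).2 (signDen_comp_mul_left_le hc hℓ ha)) fun h₀ => by
            rw [hv.signSix_eq_zero_of_signDen_eq_zero hc hℓ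
              ((div_eq_zero_iff.1 h₀).resolve_right ha₀.ne'), mul_zero]
    _ = _ := by rw [signQ_eq_signSix_div_signDen]; field_simp

end compression

/-- Monotonicity of the sharp reduced Gagliardo–Nirenberg constant of the
signpost graph with respect to the bridge length: if `0 < ℓ₁ ≤ ℓ₂` then
`C_{K_{ℓ₁}} ≤ C_{K_{ℓ₂}}`. -/
theorem signpost_CK_monotone (c : ℝ) (hc : 0 < c) (ℓ₁ ℓ₂ : ℝ)
    (h₁ : 0 < ℓ₁) (h₂ : ℓ₁ ≤ ℓ₂) :
    signCK c ℓ₁ ≤ signCK c ℓ₂ := by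
  obtain ⟨δ, hδ, rfl⟩ : ∃ δ, 0 ≤ δ ∧ ℓ₂ = ℓ₁ + δ := ⟨ℓ₂ - ℓ₁, by linarith, by ring⟩
  have hscale : (ℓ₁ + δ) / ℓ₁ * ℓ₁ = ℓ₁ + δ := div_mul_cancel₀ _ h₁.ne'
  have hratio : 1 ≤ (ℓ₁ + δ) / ℓ₁ := (one_le_div h₁).2 (by linarith)
  rw [signCK_eq_sSup_signQSet, signCK_eq_sSup_signQSet]
  refine sSup_le_sSup_of_exists_le (sq_nonneg ((ℓ₁ + δ) / ℓ₁))
    (nonneg_of_mem_signQSet hc.le (by linarith))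
    (fun q hq hq₀ => exists_mem_signQSet_add_ge hc.le h₁.le hδ hq hq₀) fun q hq hq₀ => ?_
  rw [← hscale] at hq
  exact exists_mem_signQSet_mul_ge hc.le h₁.le hratio hq hq₀
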